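/- Let d ≥ 1. Suppose v : ℝ^d × (0,T) → ℝ^d and p, φ, μ : ℝ^d × (0,T) → ℝ are smooth, supported for every t in a fixed compact set K ⊂ ℝ^d, that div v = 0 everywhere, and that the momentum equation ρ(φ)∂ₜv + ((ρ(φ)v + ρ′ j)·∇)v − div(2η(φ)Dv) + ∇p = μ∇φ holds pointwise, where j := −M(φ)∇μ. Then for every t ∈ (0,T): (1/2)∫_{ℝ^d} ρ(φ)∂ₜ|v|² − (1/2)∫_{ℝ^d} ρ′⟨v,∇φ⟩|v|² + (1/2)∫_{ℝ^d} ρ′⟨j,∇|v|²⟩ + ∫_{ℝ^d} 2η(φ)|Dv|² = ∫_{ℝ^d} μ⟨v,∇φ⟩. -/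

import Mathlib

open MeasureTheory Set Matrix

noncomputable section

/-- Euclidean dot product on `Fin d → ℝ`. -/
def dot {d : ℕ} (a b : Fin d → ℝ) : ℝ := ∑ i, a i * b i

/-- Spatial gradient of a scalar field. -/
def grad {d : ℕ} (f : (Fin d → ℝ) → ℝ) (x : Fin d → ℝ) : Fin d → ℝ :=
  fun i => fderiv ℝ f x (Pi.single i 1)

/-- Jacobian matrix `(∇v)_{ij} = ∂v_i/∂x_j` of a vector field. -/
def jac {d : ℕ} (v : (Fin d → ℝ) → Fin d → ℝ) (x : Fin d → ℝ) :
    Matrix (Fin d) (Fin d) ℝ := Matrix.of fun i j => fderiv ℝ v x (Pi.single j 1) i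

/-- Divergence `div v = tr(∇v)` of a vector field. -/
def divg {d : ℕ} (v : (Fin d → ℝ) → Fin d → ℝ) (x : Fin d → ℝ) : ℝ :=
  ∑ i, fderiv ℝ v x (Pi.single i 1) i

/-- Symmetrized gradient `Dv = (∇v + (∇v)ᵀ)/2`. -/
def symGrad {d : ℕ} (v : (Fin d → ℝ) → Fin d → ℝ) (x : Fin d → ℝ) :
    Matrix (Fin d) (Fin d) ℝ :=
  Matrix.of fun i j => (jac v x i j + jac v x j i) / 2

/-- Frobenius inner product of matrices. -/
def frob {d : ℕ} (A B : Matrix (Fin d) (Fin d) ℝ) : ℝ := ∑ i, ∑ j, A i j * B i j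

/-- Laplacian of a scalar field. -/
def lap {d : ℕ} (f : (Fin d → ℝ) → ℝ) (x : Fin d → ℝ) : ℝ :=
  ∑ i, fderiv ℝ (fun y => fderiv ℝ f y (Pi.single i 1)) x (Pi.single i 1)

/-- Affine mass density `ρ(s) = (ρ̂₂+ρ̂₁)/2 + (ρ̂₂-ρ̂₁)/2 · s`. -/
def rhoAff (ρ₁ ρ₂ s : ℝ) : ℝ := (ρ₂ + ρ₁) / 2 + (ρ₂ - ρ₁) / 2 * s

/-!
Multiply the `i`-th momentum equation by `vᵢ` and sum over `i`. Pointwise, the time-derivative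
and flux terms become `½ ρ(φ) ∂ₜ|v|²` and `½ ρ′ ⟨j, ∇|v|²⟩`, while the convective term becomes
`½ ⟨ρ(φ) v, ∇|v|²⟩`. Integrating by parts, the latter equals `-½ ∫ div(ρ(φ) v) |v|²`, and
`div(ρ(φ) v) = ρ′ ⟨v, ∇φ⟩` because `div v = 0`; the viscous term becomes `∫ 2η(φ) Dv : ∇v`, which is
`∫ 2η(φ) |Dv|²` since `Dv` is symmetric; and the pressure term becomes `-∫ p div v = 0`.
-/

section VectorCalculus

variable {d : ℕ}

theorem dot_eq_dotProduct (a b : Fin d → ℝ) : dot a b = a ⬝ᵥ b := rfl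

theorem Continuous.dot {X : Type*} [TopologicalSpace X] {F G : X → Fin d → ℝ}
    (hF : Continuous F) (hG : Continuous G) : Continuous fun x => dot (F x) (G x) := by
  unfold _root_.dot; fun_prop

theorem ContDiff.dot {E : Type*} [NormedAddCommGroup E] [NormedSpace ℝ E] {n : WithTop ℕ∞}
    {F G : E → Fin d → ℝ} (hF : ContDiff ℝ n F) (hG : ContDiff ℝ n G) :
    ContDiff ℝ n fun x => dot (F x) (G x) := by
  unfold _root_.dot
  exact ContDiff.sum fun i _ => (contDiff_pi.1 hF i).mul (contDiff_pi.1 hG i)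

theorem HasCompactSupport.dot_right {X : Type*} [TopologicalSpace X] {F G : X → Fin d → ℝ}
    (hG : HasCompactSupport G) : HasCompactSupport fun x => dot (F x) (G x) :=
  hG.mono <| Function.support_subset_iff'.2 fun x hx => by
    simp [_root_.dot, Function.notMem_support.1 hx]

theorem HasCompactSupport.component {X : Type*} [TopologicalSpace X] {F : X → Fin d → ℝ}
    (hF : HasCompactSupport F) (i : Fin d) : HasCompactSupport fun x => F x i :=
  hF.comp_left (g := fun w : Fin d → ℝ => w i) rfl

theorem HasCompactSupport.grad {f : (Fin d → ℝ) → ℝ} (hf : HasCompactSupport f) :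
    HasCompactSupport (grad f) :=
  (hf.fderiv (𝕜 := ℝ)).mono <| Function.support_subset_iff'.2 fun x hx => by
    funext i
    simp [_root_.grad, Function.notMem_support.1 hx]

theorem ContDiff.continuous_grad {f : (Fin d → ℝ) → ℝ} (hf : ContDiff ℝ 1 f) :
    Continuous (grad f) :=
  continuous_pi fun _ => (hf.continuous_fderiv one_ne_zero).clm_apply continuous_const

theorem ContDiff.continuous_divg {F : (Fin d → ℝ) → Fin d → ℝ} (hF : ContDiff ℝ 1 F) :
    Continuous (divg F) :=
  continuous_finsetSum _ fun i _ =>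
    (continuous_apply i).comp ((hF.continuous_fderiv one_ne_zero).clm_apply continuous_const)

theorem ContDiff.jac {n : WithTop ℕ∞} {F : (Fin d → ℝ) → Fin d → ℝ} (hF : ContDiff ℝ (n + 1) F)
    (i k : Fin d) : ContDiff ℝ n fun x => jac F x i k :=
  contDiff_pi.1 ((hF.fderiv_right le_rfl).clm_apply contDiff_const) i

theorem fderiv_component_apply {E : Type*} [NormedAddCommGroup E] [NormedSpace ℝ E]
    {F : E → Fin d → ℝ} {x : E} (hF : DifferentiableAt ℝ F x) (i : Fin d) (w : E) :
    fderiv ℝ (fun y => F y i) x w = fderiv ℝ F x w i := by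
  rw [fderiv_apply hF]; rfl

theorem jac_eq_grad_component {F : (Fin d → ℝ) → Fin d → ℝ} {x : Fin d → ℝ}
    (hF : DifferentiableAt ℝ F x) (i k : Fin d) : jac F x i k = grad (fun y => F y i) x k :=
  (fderiv_component_apply hF i _).symm

theorem divg_eq_sum_fderiv_component {F : (Fin d → ℝ) → Fin d → ℝ} {x : Fin d → ℝ}
    (hF : DifferentiableAt ℝ F x) :
    divg F x = ∑ k, fderiv ℝ (fun y => F y k) x (Pi.single k 1) :=
  Finset.sum_congr rfl fun k _ => (fderiv_component_apply hF k _).symm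

theorem dot_grad_dot_self {F : (Fin d → ℝ) → Fin d → ℝ} {x : Fin d → ℝ}
    (hF : DifferentiableAt ℝ F x) (w : Fin d → ℝ) :
    dot w (grad (fun y => dot (F y) (F y)) x) = 2 * ∑ i, ∑ k, w k * jac F x i k * F x i := by
  have hFi : ∀ i, DifferentiableAt ℝ (fun y => F y i) x := fun i =>
    differentiableAt_pi.1 hF i
  have hderiv : HasFDerivAt (fun y => dot (F y) (F y))
      (∑ i, (F x i • fderiv ℝ (fun y => F y i) x + F x i • fderiv ℝ (fun y => F y i) x)) x :=
    HasFDerivAt.fun_sum fun i _ => (hFi i).hasFDerivAt.mul (hFi i).hasFDerivAt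
  unfold _root_.grad
  rw [hderiv.fderiv]
  simp only [_root_.sum_apply, _root_.add_apply, _root_.smul_apply, smul_eq_mul,
    jac_eq_grad_component hF, _root_.dot, _root_.grad, Finset.mul_sum]
  rw [Finset.sum_comm]
  exact Finset.sum_congr rfl fun i _ => Finset.sum_congr rfl fun k _ => by ring

theorem divg_smul {r : (Fin d → ℝ) → ℝ} {F : (Fin d → ℝ) → Fin d → ℝ} {x : Fin d → ℝ}
    (hr : DifferentiableAt ℝ r x) (hF : DifferentiableAt ℝ F x) :
    divg (fun y => r y • F y) x = dot (F x) (grad r x) + r x * divg F x := by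
  simp only [divg, _root_.dot, _root_.grad, fderiv_fun_smul hr hF, Finset.mul_sum,
    ← Finset.sum_add_distrib, _root_.add_apply, _root_.smul_apply,
    ContinuousLinearMap.smulRight_apply, Pi.add_apply, Pi.smul_apply, smul_eq_mul]
  exact Finset.sum_congr rfl fun i _ => by ring

theorem grad_rhoAff_comp {ρ₁ ρ₂ : ℝ} {f : (Fin d → ℝ) → ℝ} {x : Fin d → ℝ}
    (hf : DifferentiableAt ℝ f x) :
    grad (fun y => rhoAff ρ₁ ρ₂ (f y)) x = ((ρ₂ - ρ₁) / 2) • grad f x := by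
  funext k
  simp [_root_.grad, rhoAff, fderiv_const_add, fderiv_const_mul hf]

theorem frob_symGrad_jac (F : (Fin d → ℝ) → Fin d → ℝ) (x : Fin d → ℝ) :
    frob (symGrad F x) (jac F x) = frob (symGrad F x) (symGrad F x) := by
  set J := jac F x
  have hswap : ∑ i, ∑ j, (J i j + J j i) * J j i = ∑ i, ∑ j, (J i j + J j i) * J i j := by
    rw [Finset.sum_comm]
    exact Finset.sum_congr rfl fun i _ => Finset.sum_congr rfl fun j _ => by ring
  simp only [frob, symGrad, of_apply]
  calc ∑ i, ∑ j, (J i j + J j i) / 2 * J i j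
      = (∑ i, ∑ j, (J i j + J j i) * J i j + ∑ i, ∑ j, (J i j + J j i) * J i j) / 4 := by
        simp only [Finset.sum_div, ← Finset.sum_add_distrib]
        exact Finset.sum_congr rfl fun i _ => Finset.sum_congr rfl fun j _ => by ring
    _ = (∑ i, ∑ j, (J i j + J j i) * J i j + ∑ i, ∑ j, (J i j + J j i) * J j i) / 4 := by
        rw [hswap]
    _ = ∑ i, ∑ j, (J i j + J j i) / 2 * ((J i j + J j i) / 2) := by
        simp only [Finset.sum_div, ← Finset.sum_add_distrib]
        exact Finset.sum_congr rfl fun i _ => Finset.sum_congr rfl fun j _ => by ring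

theorem ContDiff.mul_symGrad_row {n : WithTop ℕ∞} {c : (Fin d → ℝ) → ℝ}
    {F : (Fin d → ℝ) → Fin d → ℝ} (hc : ContDiff ℝ n c) (hF : ContDiff ℝ (n + 1) F) (i : Fin d) :
    ContDiff ℝ n fun x k => c x * symGrad F x i k :=
  contDiff_pi.2 fun k => hc.mul (((hF.jac i k).add (hF.jac k i)).div_const 2)

end VectorCalculus

section Time

variable {E F : Type*} [NormedAddCommGroup E] [NormedSpace ℝ E]
  [NormedAddCommGroup F] [NormedSpace ℝ F]

theorem DifferentiableAt.hasDerivAt_slice {f : ℝ × E → F} {t : ℝ} {x : E}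
    (hf : DifferentiableAt ℝ f (t, x)) :
    HasDerivAt (fun s => f (s, x)) (fderiv ℝ f (t, x) (1, 0)) t :=
  hf.hasFDerivAt.comp_hasDerivAt t ((hasDerivAt_id t).prodMk (hasDerivAt_const t x))

theorem ContDiff.continuous_deriv_slice {f : ℝ × E → F} (hf : ContDiff ℝ 1 f) (t : ℝ) :
    Continuous fun x => deriv (fun s => f (s, x)) t := by
  simp only [fun x => ((hf.differentiable one_ne_zero (t, x)).hasDerivAt_slice).deriv]
  exact ((hf.continuous_fderiv one_ne_zero).comp (continuous_const.prodMk continuous_id)).clm_apply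
    continuous_const

theorem ContDiff.slice {G : Type*} [NormedAddCommGroup G] [NormedSpace ℝ G] {n : WithTop ℕ∞}
    {f : E → F → G} (hf : ContDiff ℝ n fun q : E × F => f q.1 q.2) (e : E) :
    ContDiff ℝ n (f e) :=
  hf.comp (contDiff_prodMk_right e)

end Time

theorem deriv_dot_self {d : ℕ} {c : ℝ → Fin d → ℝ} {t : ℝ}
    (hc : ∀ i, DifferentiableAt ℝ (fun s => c s i) t) :
    deriv (fun s => dot (c s) (c s)) t = 2 * ∑ i, c t i * deriv (fun s => c s i) t := by
  have hderiv : HasDerivAt (fun s => dot (c s) (c s))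
      (∑ i, (deriv (fun s => c s i) t * c t i + c t i * deriv (fun s => c s i) t)) t :=
    HasDerivAt.fun_sum fun i _ => (hc i).hasDerivAt.mul (hc i).hasDerivAt
  rw [hderiv.deriv, Finset.mul_sum]
  exact Finset.sum_congr rfl fun i _ => by ring

section IntegrationByParts

variable {d : ℕ}

theorem Continuous.integrable_mul_of_hasCompactSupport {f g : (Fin d → ℝ) → ℝ}
    (hf : Continuous f) (hg : Continuous g) (hgc : HasCompactSupport g) :
    Integrable fun x => f x * g x :=
  (hf.mul hg).integrable_of_hasCompactSupport hgc.mul_left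

theorem integrable_dot_grad {F : (Fin d → ℝ) → Fin d → ℝ} {g : (Fin d → ℝ) → ℝ}
    (hF : Continuous F) (hg : ContDiff ℝ 1 g) (hgc : HasCompactSupport g) :
    Integrable fun x => dot (F x) (grad g x) :=
  (hF.dot hg.continuous_grad).integrable_of_hasCompactSupport hgc.grad.dot_right

theorem integral_dot_grad_eq_neg_integral_divg_mul {F : (Fin d → ℝ) → Fin d → ℝ}
    {g : (Fin d → ℝ) → ℝ} (hF : ContDiff ℝ 1 F) (hg : ContDiff ℝ 1 g)
    (hgc : HasCompactSupport g) :
    ∫ x, dot (F x) (grad g x) = -∫ x, divg F x * g x := by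
  have hFk : ∀ k, ContDiff ℝ 1 fun y => F y k := contDiff_pi.1 hF
  have hint : ∀ k, Integrable fun x => fderiv ℝ (fun y => F y k) x (Pi.single k 1) * g x :=
    fun k => (((hFk k).continuous_fderiv one_ne_zero).clm_apply continuous_const)
      |>.integrable_mul_of_hasCompactSupport hg.continuous hgc
  have hint' : ∀ k, Integrable fun x => F x k * grad g x k := fun k =>
    (hFk k).continuous.integrable_mul_of_hasCompactSupport
      ((hg.continuous_fderiv one_ne_zero).clm_apply continuous_const)
      (hgc.fderiv_apply (𝕜 := ℝ) _)
  have hibp : ∀ k, ∫ x, F x k * grad g x k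
      = -∫ x, fderiv ℝ (fun y => F y k) x (Pi.single k 1) * g x := fun k =>
    integral_mul_fderiv_eq_neg_fderiv_mul_of_integrable (hint k) (hint' k)
      ((hFk k).continuous.integrable_mul_of_hasCompactSupport hg.continuous hgc)
      (fun x _ => (hFk k).differentiable one_ne_zero x)
      (fun x _ => hg.differentiable one_ne_zero x)
  simp only [_root_.dot]
  rw [integral_finsetSum _ fun k _ => hint' k, Finset.sum_congr rfl fun k _ => hibp k,
    Finset.sum_neg_distrib, ← integral_finsetSum _ fun k _ => hint k]
  simp only [divg_eq_sum_fderiv_component (hF.differentiable one_ne_zero _), Finset.sum_mul]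

theorem integral_dot_smul_grad_eq_neg_of_divg_eq_zero {r g : (Fin d → ℝ) → ℝ}
    {F : (Fin d → ℝ) → Fin d → ℝ} (hr : ContDiff ℝ 1 r) (hF : ContDiff ℝ 1 F)
    (hdiv : ∀ x, divg F x = 0) (hg : ContDiff ℝ 1 g) (hgc : HasCompactSupport g) :
    ∫ x, dot (r x • F x) (grad g x) = -∫ x, dot (F x) (grad r x) * g x := by
  rw [integral_dot_grad_eq_neg_integral_divg_mul (F := fun x => r x • F x) (hr.smul hF) hg hgc]
  simp only [divg_smul (hr.differentiable one_ne_zero _) (hF.differentiable one_ne_zero _), hdiv,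
    mul_zero, add_zero]

theorem integral_sum_divg_row_mul_eq_neg_integral_frob_jac
    {σ : (Fin d → ℝ) → Fin d → Fin d → ℝ} {F : (Fin d → ℝ) → Fin d → ℝ}
    (hσ : ∀ i, ContDiff ℝ 1 fun x => σ x i) (hF : ContDiff ℝ 1 F) (hFc : HasCompactSupport F) :
    ∫ x, ∑ i, divg (fun y => σ y i) x * F x i = -∫ x, frob (of (σ x)) (jac F x) := by
  have hFi : ∀ i, ContDiff ℝ 1 fun x => F x i := contDiff_pi.1 hF
  have hFic : ∀ i, HasCompactSupport fun x => F x i := hFc.component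
  rw [integral_finsetSum _ fun i _ => (hσ i).continuous_divg.integrable_mul_of_hasCompactSupport
      (hFi i).continuous (hFic i)]
  have hibp : ∀ i, ∫ x, divg (fun y => σ y i) x * F x i
      = -∫ x, dot (σ x i) (grad (fun y => F y i) x) := fun i => by
    rw [integral_dot_grad_eq_neg_integral_divg_mul (hσ i) (hFi i) (hFic i), neg_neg]
  rw [Finset.sum_congr rfl fun i _ => hibp i, Finset.sum_neg_distrib,
    ← integral_finsetSum _ fun i _ => integrable_dot_grad (hσ i).continuous (hFi i) (hFic i)]
  simp only [frob, _root_.dot, of_apply, jac_eq_grad_component (hF.differentiable one_ne_zero _)]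

theorem integral_sum_divg_stress_mul_eq_neg_integral_frob_symGrad {c : (Fin d → ℝ) → ℝ}
    {F : (Fin d → ℝ) → Fin d → ℝ} (hc : ContDiff ℝ 1 c) (hF : ContDiff ℝ 2 F)
    (hFc : HasCompactSupport F) :
    ∫ x, ∑ i, divg (fun y k => c y * symGrad F y i k) x * F x i
      = -∫ x, c x * frob (symGrad F x) (symGrad F x) := by
  rw [integral_sum_divg_row_mul_eq_neg_integral_frob_jac (hc.mul_symGrad_row hF)
    (hF.of_le one_le_two) hFc, neg_inj]
  congr 1; funext x
  rw [← frob_symGrad_jac]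
  simp only [frob, of_apply, Finset.mul_sum, mul_assoc]

end IntegrationByParts

section TestedMomentum

variable {d : ℕ} {ρ₁ ρ₂ : ℝ} {M η : ℝ → ℝ}

theorem momentum_tested_pointwise {v : ℝ → (Fin d → ℝ) → Fin d → ℝ} {p φ μ : ℝ → (Fin d → ℝ) → ℝ}
    {t : ℝ} {x : Fin d → ℝ} (hvt : ∀ i, DifferentiableAt ℝ (fun s => v s x i) t)
    (hvx : DifferentiableAt ℝ (v t) x)
    (hσ : ∀ i, DifferentiableAt ℝ (fun y k => 2 * η (φ t y) * symGrad (v t) y i k) x)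
    (hmom : ∀ i,
      rhoAff ρ₁ ρ₂ (φ t x) * deriv (fun s => v s x i) t
        + (∑ k, (rhoAff ρ₁ ρ₂ (φ t x) * v t x k
            + (ρ₂ - ρ₁) / 2 * (-(M (φ t x) * grad (μ t) x k))) * jac (v t) x i k)
        - (∑ k, fderiv ℝ (fun y => 2 * η (φ t y) * symGrad (v t) y i k) x (Pi.single k 1))
        + grad (p t) x i
      = μ t x * grad (φ t) x i) :
    (1/2) * (rhoAff ρ₁ ρ₂ (φ t x) * deriv (fun s => dot (v s x) (v s x)) t)
      + (1/2) * dot (rhoAff ρ₁ ρ₂ (φ t x) • v t x) (grad (fun y => dot (v t y) (v t y)) x)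
      + (1/2) * ((ρ₂ - ρ₁) / 2 * dot (fun k => -(M (φ t x) * grad (μ t) x k))
          (grad (fun y => dot (v t y) (v t y)) x))
      - ∑ i, divg (fun y k => 2 * η (φ t y) * symGrad (v t) y i k) x * v t x i
      + dot (v t x) (grad (p t) x)
      = μ t x * dot (v t x) (grad (φ t) x) := by
  have htime : rhoAff ρ₁ ρ₂ (φ t x) * deriv (fun s => dot (v s x) (v s x)) t
      = 2 * ∑ i, rhoAff ρ₁ ρ₂ (φ t x) * deriv (fun s => v s x i) t * v t x i := by
    rw [deriv_dot_self hvt, mul_left_comm, Finset.mul_sum]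
    exact congrArg _ (Finset.sum_congr rfl fun i _ => by ring)
  have hconv : dot (rhoAff ρ₁ ρ₂ (φ t x) • v t x) (grad (fun y => dot (v t y) (v t y)) x)
      = 2 * ∑ i, ∑ k, rhoAff ρ₁ ρ₂ (φ t x) * v t x k * jac (v t) x i k * v t x i := by
    simp only [dot_grad_dot_self hvx, Pi.smul_apply, smul_eq_mul]
  have hflux : (ρ₂ - ρ₁) / 2 * dot (fun k => -(M (φ t x) * grad (μ t) x k))
        (grad (fun y => dot (v t y) (v t y)) x)
      = 2 * ∑ i, ∑ k, (ρ₂ - ρ₁) / 2 * (-(M (φ t x) * grad (μ t) x k)) * jac (v t) x i k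
        * v t x i := by
    rw [dot_grad_dot_self hvx, mul_left_comm, Finset.mul_sum]
    refine congrArg _ (Finset.sum_congr rfl fun i _ => ?_)
    rw [Finset.mul_sum]
    exact Finset.sum_congr rfl fun k _ => by ring
  have hpres : dot (v t x) (grad (p t) x) = ∑ i, grad (p t) x i * v t x i :=
    Finset.sum_congr rfl fun i _ => mul_comm _ _
  have hvisc : ∀ i, divg (fun y k => 2 * η (φ t y) * symGrad (v t) y i k) x
      = ∑ k, fderiv ℝ (fun y => 2 * η (φ t y) * symGrad (v t) y i k) x (Pi.single k 1) :=
    fun i => divg_eq_sum_fderiv_component (hσ i)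
  have hrhs : μ t x * dot (v t x) (grad (φ t) x) = ∑ i, μ t x * grad (φ t) x i * v t x i := by
    simp only [_root_.dot, Finset.mul_sum]
    exact Finset.sum_congr rfl fun i _ => by ring
  rw [htime, hconv, hflux, hpres, hrhs, ← Finset.sum_congr rfl fun i _ =>
    congrArg (· * v t x i) (hmom i)]
  simp only [hvisc, add_mul, sub_mul, Finset.sum_add_distrib, Finset.sum_sub_distrib,
    Finset.sum_mul]
  ring

theorem integral_tested_momentum {v : (Fin d → ℝ) → Fin d → ℝ} {p φ μ a : (Fin d → ℝ) → ℝ}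
    (hM : Continuous M) (hη : ContDiff ℝ 1 η) (hv : ContDiff ℝ 2 v) (hp : ContDiff ℝ 1 p)
    (hφ : ContDiff ℝ 1 φ) (hμ : ContDiff ℝ 1 μ) (hvc : HasCompactSupport v)
    (hpc : HasCompactSupport p) (hdiv : ∀ x, divg v x = 0) (ha : Integrable a)
    (htested : ∀ x, (1/2) * a x
      + (1/2) * dot (rhoAff ρ₁ ρ₂ (φ x) • v x) (grad (fun y => dot (v y) (v y)) x)
      + (1/2) * ((ρ₂ - ρ₁) / 2 * dot (fun k => -(M (φ x) * grad μ x k))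
          (grad (fun y => dot (v y) (v y)) x))
      - ∑ i, divg (fun y k => 2 * η (φ y) * symGrad v y i k) x * v x i
      + dot (v x) (grad p x)
      = μ x * dot (v x) (grad φ x)) :
    (1/2) * (∫ x, a x)
      - (1/2) * (∫ x, (ρ₂ - ρ₁) / 2 * dot (v x) (grad φ x) * dot (v x) (v x))
      + (1/2) * (∫ x, (ρ₂ - ρ₁) / 2 *
          dot (fun k => -(M (φ x) * grad μ x k)) (grad (fun y => dot (v y) (v y)) x))
      + (∫ x, 2 * η (φ x) * frob (symGrad v x) (symGrad v x))
      = ∫ x, μ x * dot (v x) (grad φ x) := by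
  have hv₁ : ContDiff ℝ 1 v := hv.of_le one_le_two
  have hρ : ContDiff ℝ 1 fun y => rhoAff ρ₁ ρ₂ (φ y) := by unfold rhoAff; fun_prop
  have hηφ : ContDiff ℝ 1 fun y => 2 * η (φ y) := contDiff_const.mul (hη.comp hφ)
  have hS : ContDiff ℝ 1 fun y => dot (v y) (v y) := hv₁.dot hv₁
  have hSc : HasCompactSupport fun y => dot (v y) (v y) := hvc.dot_right
  have hj : Continuous fun x k => -(M (φ x) * grad μ x k) :=
    continuous_pi fun k => ((hM.comp hφ.continuous).mul
      ((continuous_apply k).comp hμ.continuous_grad)).neg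
  have hconv : ∫ x, dot (rhoAff ρ₁ ρ₂ (φ x) • v x) (grad (fun y => dot (v y) (v y)) x)
      = -∫ x, (ρ₂ - ρ₁) / 2 * dot (v x) (grad φ x) * dot (v x) (v x) := by
    rw [integral_dot_smul_grad_eq_neg_of_divg_eq_zero hρ hv₁ hdiv hS hSc]
    simp only [grad_rhoAff_comp (hφ.differentiable one_ne_zero _), dot_eq_dotProduct,
      dotProduct_smul, smul_eq_mul]
  have hpres : ∫ x, dot (v x) (grad p x) = 0 := by
    rw [integral_dot_grad_eq_neg_integral_divg_mul hv₁ hp hpc]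
    simp [hdiv]
  have hIb := (integrable_dot_grad (F := fun x => rhoAff ρ₁ ρ₂ (φ x) • v x)
    (hρ.continuous.smul hv₁.continuous) hS hSc).const_mul (1/2)
  have hIc := ((integrable_dot_grad hj hS hSc).const_mul ((ρ₂ - ρ₁) / 2)).const_mul (1/2)
  have hIe : Integrable fun x => ∑ i, divg (fun y k => 2 * η (φ y) * symGrad v y i k) x * v x i :=
    integrable_finsetSum _ fun i _ =>
      (hηφ.mul_symGrad_row hv i).continuous_divg.integrable_mul_of_hasCompactSupport
        ((continuous_apply i).comp hv₁.continuous) (hvc.component i)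
  have hIf := integrable_dot_grad hv₁.continuous hp hpc
  have hint := congrArg (fun f => ∫ x, f x) (funext htested)
  simp only at hint
  rw [integral_add ((((ha.const_mul _).fun_add hIb).fun_add hIc).sub' hIe) hIf,
    integral_sub (((ha.const_mul _).fun_add hIb).fun_add hIc) hIe,
    integral_add ((ha.const_mul _).fun_add hIb) hIc, integral_add (ha.const_mul _) hIb,
    integral_const_mul, integral_const_mul, integral_const_mul, hconv,
    integral_sum_divg_stress_mul_eq_neg_integral_frob_symGrad hηφ hv hvc, hpres] at hint
  linarith

end TestedMomentum

theorem momentum_tested_with_velocity_general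
    {d : ℕ} {T : ℝ}
    {ρ₁ ρ₂ : ℝ}
    (M η : ℝ → ℝ)
    (hM : ContDiff ℝ (⊤ : ℕ∞) M) (hη : ContDiff ℝ (⊤ : ℕ∞) η)
    (v : ℝ → (Fin d → ℝ) → Fin d → ℝ) (p φ μ : ℝ → (Fin d → ℝ) → ℝ)
    (hv : ContDiff ℝ (⊤ : ℕ∞) fun q : ℝ × (Fin d → ℝ) => v q.1 q.2)
    (hp : ContDiff ℝ (⊤ : ℕ∞) fun q : ℝ × (Fin d → ℝ) => p q.1 q.2)
    (hφ : ContDiff ℝ (⊤ : ℕ∞) fun q : ℝ × (Fin d → ℝ) => φ q.1 q.2)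
    (hμ : ContDiff ℝ (⊤ : ℕ∞) fun q : ℝ × (Fin d → ℝ) => μ q.1 q.2)
    {K : Set (Fin d → ℝ)} (hK : IsCompact K)
    (hsupp : ∀ t, ∀ x ∉ K, v t x = 0 ∧ p t x = 0 ∧ φ t x = 0 ∧ μ t x = 0)
    -- incompressibility everywhere
    (hdiv : ∀ t x, divg (v t) x = 0)
    -- momentum equation: ρ(φ)∂ₜv + ((ρ(φ)v + ρ′ j)·∇)v − div(2η(φ)Dv) + ∇p = μ∇φ,
    -- where j = −M(φ)∇μ
    (hmom : ∀ t ∈ Ioo (0:ℝ) T, ∀ x, ∀ i,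
      rhoAff ρ₁ ρ₂ (φ t x) * deriv (fun s => v s x i) t
        + (∑ k, (rhoAff ρ₁ ρ₂ (φ t x) * v t x k
            + (ρ₂ - ρ₁) / 2 * (-(M (φ t x) * grad (μ t) x k))) * jac (v t) x i k)
        - (∑ k, fderiv ℝ (fun y => 2 * η (φ t y) * symGrad (v t) y i k) x (Pi.single k 1))
        + grad (p t) x i
      = μ t x * grad (φ t) x i) :
    ∀ t ∈ Ioo (0:ℝ) T,
      (1/2) * (∫ x, rhoAff ρ₁ ρ₂ (φ t x) * deriv (fun s => dot (v s x) (v s x)) t)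
        - (1/2) * (∫ x, (ρ₂ - ρ₁) / 2 * dot (v t x) (grad (φ t) x) * dot (v t x) (v t x))
        + (1/2) * (∫ x, (ρ₂ - ρ₁) / 2 *
            dot (fun k => -(M (φ t x) * grad (μ t) x k))
              (grad (fun y => dot (v t y) (v t y)) x))
        + (∫ x, 2 * η (φ t x) * frob (symGrad (v t) x) (symGrad (v t) x))
      = ∫ x, μ t x * dot (v t x) (grad (φ t) x) := by
  intro t ht
  have h1 : (1 : WithTop ℕ∞) ≤ (⊤ : ℕ∞) := by norm_cast
  have hv₂ : ContDiff ℝ 2 (v t) := (hv.slice t).of_le (by norm_cast)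
  have hφ₁ : ContDiff ℝ 1 (φ t) := (hφ.slice t).of_le h1
  have hη₁ : ContDiff ℝ 1 η := hη.of_le h1
  have htime : Integrable fun x =>
      rhoAff ρ₁ ρ₂ (φ t x) * deriv (fun s => dot (v s x) (v s x)) t := by
    refine (continuous_const.add (continuous_const.mul hφ₁.continuous))
      |>.integrable_mul_of_hasCompactSupport (((hv.dot hv).of_le h1).continuous_deriv_slice t)
        (HasCompactSupport.intro hK fun x hx => ?_)
    have hzero : (fun s => dot (v s x) (v s x)) = fun _ => 0 :=
      funext fun s => by simp [(hsupp s x hx).1, dot]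
    rw [hzero, deriv_const]
  refine integral_tested_momentum hM.continuous hη₁ hv₂ ((hp.slice t).of_le h1) hφ₁
    ((hμ.slice t).of_le h1) (.intro hK fun x hx => (hsupp t x hx).1)
    (.intro hK fun x hx => (hsupp t x hx).2.1) (hdiv t) htime fun x => ?_
  refine momentum_tested_pointwise (fun i => ?_) (hv₂.differentiable two_ne_zero x)
    (fun i => ?_) (hmom t ht x)
  · exact differentiableAt_pi.1
      (hv.differentiable (by simp) (t, x)).hasDerivAt_slice.differentiableAt i
  · exact ((contDiff_const.mul (hη₁.comp hφ₁)).mul_symGrad_row hv₂ i).differentiable one_ne_zero x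

/-- Identity (2.2a): testing the momentum equation of the Abels–Garcke–Grün
model with the velocity `v`. -/
theorem momentum_tested_with_velocity
    {d : ℕ} (hd : 1 ≤ d) {T : ℝ} (hT : 0 < T)
    {ρ₁ ρ₂ : ℝ} (hρ₁ : 0 < ρ₁) (hρ₂ : 0 < ρ₂)
    (M η : ℝ → ℝ)
    (hM : ContDiff ℝ (⊤ : ℕ∞) M) (hη : ContDiff ℝ (⊤ : ℕ∞) η)
    (hMnn : ∀ s, 0 ≤ M s) (hηpos : ∀ s, 0 < η s)
    (v : ℝ → (Fin d → ℝ) → Fin d → ℝ) (p φ μ : ℝ → (Fin d → ℝ) → ℝ)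
    (hv : ContDiff ℝ (⊤ : ℕ∞) fun q : ℝ × (Fin d → ℝ) => v q.1 q.2)
    (hp : ContDiff ℝ (⊤ : ℕ∞) fun q : ℝ × (Fin d → ℝ) => p q.1 q.2)
    (hφ : ContDiff ℝ (⊤ : ℕ∞) fun q : ℝ × (Fin d → ℝ) => φ q.1 q.2)
    (hμ : ContDiff ℝ (⊤ : ℕ∞) fun q : ℝ × (Fin d → ℝ) => μ q.1 q.2)
    {K : Set (Fin d → ℝ)} (hK : IsCompact K)
    (hsupp : ∀ t, ∀ x ∉ K, v t x = 0 ∧ p t x = 0 ∧ φ t x = 0 ∧ μ t x = 0)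
    -- incompressibility everywhere
    (hdiv : ∀ t x, divg (v t) x = 0)
    -- momentum equation: ρ(φ)∂ₜv + ((ρ(φ)v + ρ′ j)·∇)v − div(2η(φ)Dv) + ∇p = μ∇φ,
    -- where j = −M(φ)∇μ
    (hmom : ∀ t ∈ Ioo (0:ℝ) T, ∀ x, ∀ i,
      rhoAff ρ₁ ρ₂ (φ t x) * deriv (fun s => v s x i) t
        + (∑ k, (rhoAff ρ₁ ρ₂ (φ t x) * v t x k
            + (ρ₂ - ρ₁) / 2 * (-(M (φ t x) * grad (μ t) x k))) * jac (v t) x i k)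
        - (∑ k, fderiv ℝ (fun y => 2 * η (φ t y) * symGrad (v t) y i k) x (Pi.single k 1))
        + grad (p t) x i
      = μ t x * grad (φ t) x i) :
    ∀ t ∈ Ioo (0:ℝ) T,
      (1/2) * (∫ x, rhoAff ρ₁ ρ₂ (φ t x) * deriv (fun s => dot (v s x) (v s x)) t)
        - (1/2) * (∫ x, (ρ₂ - ρ₁) / 2 * dot (v t x) (grad (φ t) x) * dot (v t x) (v t x))
        + (1/2) * (∫ x, (ρ₂ - ρ₁) / 2 *
            dot (fun k => -(M (φ t x) * grad (μ t) x k))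
              (grad (fun y => dot (v t y) (v t y)) x))
        + (∫ x, 2 * η (φ t x) * frob (symGrad (v t) x) (symGrad (v t) x))
      = ∫ x, μ t x * dot (v t x) (grad (φ t) x) :=
  momentum_tested_with_velocity_general M η hM hη v p φ μ hv hp hφ hμ hK hsupp hdiv hmom
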